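/- For every node Q_i of a 3-dimensional toric idealistic cluster A=(C,m) one has χ_i = D_i − R_i + T_i. -/

import Mathlib

open Finset

/-!
Common framework: 3-dimensional toric constellations and toric idealistic clusters.
The edge labels `1, 2, 3` of the paper are encoded as `0, 1, 2 : Fin 3`.
-/

/-- A 3-dimensional toric constellation: a finite rooted tree on nodes `0, …, r−1`
(node `0` the root, every child having larger index than its parent), each node having
at most three children, the edges from a node to its children carrying pairwise
distinct labels in `Fin 3`.  `label j` is the label of the edge from `parent j` to `j`
(irrelevant for the root). -/
structure ToricConstellation (r : ℕ) where
  parent : Fin r → Fin r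
  label : Fin r → Fin 3
  parent_lt : ∀ i : Fin r, 0 < (i : ℕ) → (parent i : ℕ) < (i : ℕ)
  parent_root : ∀ i : Fin r, (i : ℕ) = 0 → parent i = i
  label_distinct : ∀ i j : Fin r, 0 < (i : ℕ) → 0 < (j : ℕ) → i ≠ j →
    parent i = parent j → label i ≠ label j

namespace ToricConstellation

variable {r : ℕ}

/-- The ordered triple of vectors of `ℤ³` attached to a node: the root carries the
standard basis, and the child along the edge labelled `a` of a node with cone
`(u₁,u₂,u₃)` carries the triple obtained by replacing `u_a` with `u₁+u₂+u₃`. -/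
def cone (C : ToricConstellation r) (i : Fin r) : Fin 3 → (Fin 3 → ℤ) :=
  if h : 0 < (i : ℕ) then
    Function.update (cone C (C.parent i)) (C.label i) (∑ a, cone C (C.parent i) a)
  else fun a => Pi.single a 1
termination_by (i : ℕ)
decreasing_by all_goals exact C.parent_lt i h

/-- `v(Q) = u₁ + u₂ + u₃`, the sum of the cone vectors of a node. -/
def v (C : ToricConstellation r) (i : Fin r) : Fin 3 → ℤ := ∑ a, cone C i a

/-- `Prox C j i` means `j → i`, i.e. `Q_j` is proximate to `Q_i`:
`j ≠ i` and `v(Q_i)` is an entry of `cone(Q_j)`. -/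
def Prox (C : ToricConstellation r) (j i : Fin r) : Prop :=
  j ≠ i ∧ ∃ a : Fin 3, cone C j a = v C i

instance (C : ToricConstellation r) (j i : Fin r) : Decidable (C.Prox j i) := by
  unfold Prox; infer_instance

/-- `inChain C i a b j = true` iff `j = Q_i(a, b^t)` for some `t ≥ 0`, i.e. `j` is
reached from `i` by one edge labelled `a` followed by `t` edges labelled `b`. -/
def inChain (C : ToricConstellation r) (i : Fin r) (a b : Fin 3) (j : Fin r) : Bool :=
  if h : 0 < (j : ℕ) then
    (decide (C.parent j = i) && decide (C.label j = a)) ||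
      (decide (C.label j = b) && inChain C i a b (C.parent j))
  else false
termination_by (j : ℕ)
decreasing_by exact C.parent_lt j h

/-- `LinProx C j i` means `j ↠ i`, i.e. `Q_j` is linearly proximate to `Q_i`. -/
def LinProx (C : ToricConstellation r) (j i : Fin r) : Prop :=
  ∃ a b : Fin 3, a ≠ b ∧ inChain C i a b j = true

instance (C : ToricConstellation r) (j i : Fin r) : Decidable (C.LinProx j i) := by
  unfold LinProx; infer_instance

/-- `j` is a child of `i`. -/
def IsChild (C : ToricConstellation r) (j i : Fin r) : Prop :=
  0 < (j : ℕ) ∧ C.parent j = i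

instance (C : ToricConstellation r) (j i : Fin r) : Decidable (C.IsChild j i) := by
  unfold IsChild; infer_instance

/-- The set `S_i` of labels of the edges on the path from the root to `Q_i`. -/
def labelsUnder (C : ToricConstellation r) (i : Fin r) : Finset (Fin 3) :=
  if h : 0 < (i : ℕ) then insert (C.label i) (labelsUnder C (C.parent i)) else ∅
termination_by (i : ℕ)
decreasing_by exact C.parent_lt i h

/-- `i` is a weak ancestor of `j` (`i = j` or `i` a strict ancestor of `j`). -/
def anc (C : ToricConstellation r) (i j : Fin r) : Bool :=
  decide (i = j) || (if h : 0 < (j : ℕ) then anc C i (C.parent j) else false)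
termination_by (j : ℕ)
decreasing_by exact C.parent_lt j h

/-- The set of nodes weakly above `i` (`i` together with its descendants). -/
def weakAbove (C : ToricConstellation r) (i : Fin r) : Finset (Fin r) :=
  univ.filter (fun j => anc C i j = true)

end ToricConstellation

/-- A 3-dimensional toric cluster: a toric constellation together with a positive
integer weight for each node. -/
structure ToricCluster (r : ℕ) extends ToricConstellation r where
  m : Fin r → ℤ
  m_pos : ∀ j, 0 < m j

namespace ToricCluster

open ToricConstellation

variable {r : ℕ}

/-- `M_{Q_i}(a,b) := Σ_{t ≥ 0, Q_i(a,b^t) ∈ C} m_{Q_i(a,b^t)}`. -/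
def M (A : ToricCluster r) (i : Fin r) (a b : Fin 3) : ℤ :=
  ∑ j ∈ univ.filter (fun j => inChain A.toToricConstellation i a b j = true), A.m j

/-- The cluster is idealistic: the linear proximity inequalities
`M_{Q_i}(a,b) + M_{Q_i}(b,a) ≤ m_{Q_i}` hold. -/
def Idealistic (A : ToricCluster r) : Prop :=
  ∀ i : Fin r, ∀ a b : Fin 3, a ≠ b → A.M i a b + A.M i b a ≤ A.m i

/-- The set of nodes `j` proximate to `i` (`j → i`). -/
def proxSet (A : ToricCluster r) (i : Fin r) : Finset (Fin r) :=
  univ.filter (fun j => Prox A.toToricConstellation j i)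

/-- `B_i`: the set of nodes to which `i` is proximate. -/
def Bset (A : ToricCluster r) (i : Fin r) : Finset (Fin r) :=
  univ.filter (fun j => Prox A.toToricConstellation i j)

/-- `A_i`: the children `k` of `i` for which there is no `l` with `i → l` and `k → l`. -/
def Aset (A : ToricCluster r) (i : Fin r) : Finset (Fin r) :=
  univ.filter (fun k => IsChild A.toToricConstellation k i ∧
    ¬ ∃ l, Prox A.toToricConstellation i l ∧ Prox A.toToricConstellation k l)

/-- The Euler characteristic `χ_i = χ(E_i°)`. -/
def chi (A : ToricCluster r) (i : Fin r) : ℤ :=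
  3 + A.m i * (A.m i - 3)
    - ∑ j ∈ A.proxSet i, A.m j * (A.m j - 1)
    + ∑ j ∈ A.proxSet i,
        (A.m j - ∑ k ∈ (A.proxSet i).filter
          (fun k => LinProx A.toToricConstellation k j), A.m k)
    + ∑ j ∈ A.Bset i,
        (A.m i - ∑ k ∈ (A.proxSet j).filter
          (fun k => LinProx A.toToricConstellation k i), A.m k)
    - ((A.Aset i).card : ℤ) - 2 * ((A.Bset i).card : ℤ)
    + (((A.Bset i).card.choose 2 : ℕ) : ℤ)

/-- `D_i = m_i² − Σ_{j→i} m_j²`. -/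
def D (A : ToricCluster r) (i : Fin r) : ℤ :=
  A.m i ^ 2 - ∑ j ∈ A.proxSet i, A.m j ^ 2

/-- `r_{ab} = m_i − M_{Q_i}(a,b) − M_{Q_i}(b,a)`. -/
def rab (A : ToricCluster r) (i : Fin r) (a b : Fin 3) : ℤ :=
  A.m i - A.M i a b - A.M i b a

/-- `R_i = r̂_{12} + r̂_{13} + r̂_{23}`, where `r̂_{ab} = r_{ab}` if the remaining third
label does not appear under `Q_i`, and `r̂_{ab} = 0` otherwise.  (Labels `1,2,3` are
encoded as `0,1,2 : Fin 3`.) -/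
def R (A : ToricCluster r) (i : Fin r) : ℤ :=
  (if (2 : Fin 3) ∉ labelsUnder A.toToricConstellation i then A.rab i 0 1 else 0)
  + (if (1 : Fin 3) ∉ labelsUnder A.toToricConstellation i then A.rab i 0 2 else 0)
  + (if (0 : Fin 3) ∉ labelsUnder A.toToricConstellation i then A.rab i 1 2 else 0)

/-- `T_i = 3 − #A_i − 2·#B_i + (#B_i choose 2)`. -/
def T (A : ToricCluster r) (i : Fin r) : ℤ :=
  3 - ((A.Aset i).card : ℤ) - 2 * ((A.Bset i).card : ℤ)
    + (((A.Bset i).card.choose 2 : ℕ) : ℤ)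

/-- The nodes to which `i` is proximate, of smaller index: the sums in the recursive
definitions of the numerical data range over the nodes to which `i` is proximate,
which are ancestors of `i` and hence have smaller index (making the recursion
well-founded). -/
def anteSet (A : ToricCluster r) (i : Fin r) : Finset (Fin r) :=
  univ.filter (fun j => (j : ℕ) < (i : ℕ) ∧ Prox A.toToricConstellation i j)

/-- The numerical datum `N_i := m_i + Σ_{j : i→j} N_j`. -/
def N (A : ToricCluster r) (i : Fin r) : ℤ :=
  A.m i + ∑ j ∈ (A.anteSet i).attach, N A j.1
termination_by (i : ℕ)
decreasing_by
  have hj := j.2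
  simp only [anteSet, Finset.mem_filter] at hj
  exact hj.2.1

/-- The numerical datum `ν_i := 3 + Σ_{j : i→j} (ν_j − 1)`. -/
def nu (A : ToricCluster r) (i : Fin r) : ℤ :=
  3 + ∑ j ∈ (A.anteSet i).attach, (nu A j.1 - 1)
termination_by (i : ℕ)
decreasing_by
  have hj := j.2
  simp only [anteSet, Finset.mem_filter] at hj
  exact hj.2.1

end ToricCluster


open ToricConstellation ToricCluster


/-!
Comparing both sides, the identity becomes a statement about each node `Q_k` proximate to
`Q_i`: writing `S = S_i` and `L` for the set of labels on the path from `Q_i` down to `Q_k`,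
the weight `m_k` occurs in `R_i` with multiplicity `#(S ∪ L)ᶜ` and in the two double sums of
`χ_i` with multiplicities `#L - 1` and (if `L` is not all of `{1,2,3}`) `#(S \ L)`; these add
up to `2`, and `#B_i = #S_i`.

These counts come from a combinatorial description of proximity: `k → i` iff the label of the
child `x` of `Q_i` towards `Q_k` does not reappear below `x`. The only geometric input is the
injectivity of `v`. Below the child `x` of `p`, the matrix of coordinates of the cone vectors in
the unimodular basis `cone p` keeps its column `label x` minimal, strictly so in some row
(`IsMinColumn`), since each step replaces a row by the sum of all rows; hence the coordinates of
`v` there are strictly smallest at `label x`, which separates `v` of nodes below different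
children of `p` from each other and from `v p`, whose coordinates are all `1`.
-/

open Matrix

lemma fin_three_eq_or_eq_of_ne {a b c d : Fin 3} (hab : a ≠ b) (hac : a ≠ c) (hbc : b ≠ c)
    (hd : d ≠ c) : d = a ∨ d = b := by
  revert a b c d; decide

lemma Finset.card_compl_union_add_card_sub_one_add_card_sdiff {α : Type*} [Fintype α]
    [DecidableEq α] {S L : Finset α} (hL : L.Nonempty) :
    #(S ∪ L)ᶜ + (#L - 1) + (if L = univ then 0 else #(S \ L)) = Fintype.card α - 1 := by
  have h₁ := card_add_card_compl (S ∪ L)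
  have h₂ := card_sdiff_add_card S L
  have h₃ := hL.card_pos
  split_ifs with hLu
  · subst hLu
    simp [card_univ]
  · omega

def IsMinColumn {ι : Type*} (L : Matrix ι ι ℤ) (a : ι) : Prop :=
  (∀ c d, L c a ≤ L c d) ∧ ∀ d ≠ a, ∃ c, L c a < L c d

lemma isMinColumn_updateRow_one {ι : Type*} [DecidableEq ι] (a : ι) :
    IsMinColumn ((1 : Matrix ι ι ℤ).updateRow a (fun _ => 1)) a := by
  refine ⟨fun c d => ?_, fun d hd => ⟨d, by simp [hd]⟩⟩
  rcases eq_or_ne c a with rfl | hc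
  · simp
  · simp only [updateRow_ne hc, one_apply, if_neg hc]
    split_ifs <;> norm_num

lemma IsMinColumn.one_vecMul_lt {ι : Type*} [Fintype ι] {L : Matrix ι ι ℤ} {a d : ι}
    (h : IsMinColumn L a) (hd : d ≠ a) : (1 ᵥ* L) a < (1 ᵥ* L) d := by
  obtain ⟨c, hc⟩ := h.2 d hd
  simp only [vecMul, dotProduct, Pi.one_apply, one_mul]
  exact Finset.sum_lt_sum (fun c _ => h.1 c d) ⟨c, Finset.mem_univ _, hc⟩

lemma IsMinColumn.updateRow_one_vecMul {ι : Type*} [Fintype ι] [DecidableEq ι]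
    {L : Matrix ι ι ℤ} {a : ι} (h : IsMinColumn L a) (b : ι) :
    IsMinColumn (L.updateRow b (1 ᵥ* L)) a := by
  refine ⟨fun c d => ?_, fun d hd => ?_⟩
  · rcases eq_or_ne c b with rfl | hc
    · rcases eq_or_ne d a with rfl | hd
      · exact le_rfl
      · simpa using (h.one_vecMul_lt hd).le
    · simpa [updateRow_ne hc] using h.1 c d
  · obtain ⟨c, hc⟩ := h.2 d hd
    rcases eq_or_ne c b with rfl | hcb
    · exact ⟨c, by simpa using h.one_vecMul_lt hd⟩
    · exact ⟨c, by simpa [updateRow_ne hcb] using hc⟩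

namespace ToricConstellation

variable {r : ℕ} {C : ToricConstellation r}

/-! ### Ancestors -/

lemma anc_iff {i j : Fin r} :
    C.anc i j = true ↔ i = j ∨ 0 < (j : ℕ) ∧ C.anc i (C.parent j) = true := by
  conv_lhs => rw [anc]
  by_cases h : 0 < (j : ℕ) <;> simp [h]

lemma anc_refl (i : Fin r) : C.anc i i = true := anc_iff.2 (Or.inl rfl)

lemma anc_parent_self {j : Fin r} (h : 0 < (j : ℕ)) : C.anc (C.parent j) j = true :=
  anc_iff.2 (Or.inr ⟨h, anc_refl _⟩)

lemma IsChild.anc {x i : Fin r} (hx : C.IsChild x i) : C.anc i x = true :=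
  hx.2 ▸ anc_parent_self hx.1

lemma IsChild.lt {x i : Fin r} (hx : C.IsChild x i) : i < x :=
  hx.2 ▸ C.parent_lt x hx.1

lemma anc_parent_of_ne {i j : Fin r} (h : C.anc i j = true) (hne : i ≠ j) :
    C.anc i (C.parent j) = true :=
  (anc_iff.1 h).resolve_left hne |>.2

lemma pos_of_anc_of_ne {i j : Fin r} (h : C.anc i j = true) (hne : i ≠ j) : 0 < (j : ℕ) :=
  (anc_iff.1 h).resolve_left hne |>.1

lemma le_of_anc {i j : Fin r} (h : C.anc i j = true) : i ≤ j := by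
  induction j using WellFoundedLT.induction with | ind j IH
  rcases anc_iff.1 h with rfl | ⟨h0, hp⟩
  · exact le_rfl
  · exact (IH _ (C.parent_lt j h0) hp).trans (C.parent_lt j h0).le

lemma lt_of_anc_of_ne {i j : Fin r} (h : C.anc i j = true) (hne : i ≠ j) : i < j :=
  lt_of_le_of_ne (le_of_anc h) hne

lemma anc_antisymm {i j : Fin r} (h₁ : C.anc i j = true) (h₂ : C.anc j i = true) : i = j :=
  le_antisymm (le_of_anc h₁) (le_of_anc h₂)

lemma anc_trans {i j k : Fin r} (h₁ : C.anc i j = true) (h₂ : C.anc j k = true) :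
    C.anc i k = true := by
  induction k using WellFoundedLT.induction with | ind k IH
  rcases anc_iff.1 h₂ with rfl | ⟨h0, hp⟩
  · exact h₁
  · exact anc_iff.2 (Or.inr ⟨h0, IH _ (C.parent_lt k h0) hp⟩)

lemma anc_of_val_eq_zero {i j : Fin r} (hi : (i : ℕ) = 0) : C.anc i j = true := by
  induction j using WellFoundedLT.induction with | ind j IH
  by_cases h0 : 0 < (j : ℕ)
  · exact anc_iff.2 (Or.inr ⟨h0, IH _ (C.parent_lt j h0)⟩)
  · exact anc_iff.2 (Or.inl (Fin.ext (by omega)))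

lemma anc_total_of_anc {x y k : Fin r} (hx : C.anc x k = true) (hy : C.anc y k = true) :
    C.anc x y = true ∨ C.anc y x = true := by
  induction k using WellFoundedLT.induction with | ind k IH
  rcases anc_iff.1 hx with rfl | ⟨h0, hx'⟩
  · exact Or.inr hy
  rcases anc_iff.1 hy with rfl | ⟨-, hy'⟩
  · exact Or.inl hx
  exact IH _ (C.parent_lt k h0) hx' hy'

lemma exists_isChild_anc {q i : Fin r} (h : C.anc q i = true) (hne : q ≠ i) :
    ∃ x, C.IsChild x q ∧ C.anc x i = true := by
  induction i using WellFoundedLT.induction with | ind i IH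
  have h0 := pos_of_anc_of_ne h hne
  by_cases hp : C.parent i = q
  · exact ⟨i, ⟨h0, hp⟩, anc_refl _⟩
  obtain ⟨x, hx, hxi⟩ := IH _ (C.parent_lt i h0) (anc_parent_of_ne h hne) (Ne.symm hp)
  exact ⟨x, hx, anc_trans hxi (anc_parent_self h0)⟩

lemma IsChild.eq_or_eq_of_anc {x i y : Fin r} (hx : C.IsChild x i)
    (hy : C.anc i y = true) (hyx : C.anc y x = true) : y = i ∨ y = x := by
  by_cases hxy : y = x
  · exact Or.inr hxy
  · exact Or.inl (anc_antisymm (hx.2 ▸ anc_parent_of_ne hyx hxy) hy)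

lemma IsChild.eq_of_anc {x y i k : Fin r} (hx : C.IsChild x i) (hy : C.IsChild y i)
    (hxk : C.anc x k = true) (hyk : C.anc y k = true) : x = y := by
  rcases anc_total_of_anc hxk hyk with h | h
  · exact (hy.eq_or_eq_of_anc hx.anc h).resolve_left (ne_of_gt hx.lt)
  · exact ((hx.eq_or_eq_of_anc hy.anc h).resolve_left (ne_of_gt hy.lt)).symm

lemma anc_or_anc_or_exists_isChild (i j : Fin r) :
    C.anc i j = true ∨ C.anc j i = true ∨
      ∃ p x y, C.IsChild x p ∧ C.IsChild y p ∧ C.label x ≠ C.label y ∧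
        C.anc x i = true ∧ C.anc y j = true := by
  induction j using WellFoundedLT.induction with | ind j IH
  by_cases hij : C.anc i j = true
  · exact Or.inl hij
  by_cases hji : C.anc j i = true
  · exact Or.inr (Or.inl hji)
  have h0 : 0 < (j : ℕ) := Nat.pos_of_ne_zero fun h => hji (anc_of_val_eq_zero h)
  rcases IH _ (C.parent_lt j h0) with h | h | ⟨p, x, y, hx, hy, hl, hxi, hyj⟩
  · exact absurd (anc_trans h (anc_parent_self h0)) hij
  · have hq : C.parent j ≠ i := fun hq => hij (hq ▸ anc_parent_self h0)
    obtain ⟨x, hx, hxi⟩ := exists_isChild_anc h hq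
    have hxj : x ≠ j := fun hxj => hji (hxj ▸ hxi)
    refine Or.inr (Or.inr ⟨_, x, j, hx, ⟨h0, rfl⟩, ?_, hxi, anc_refl _⟩)
    exact C.label_distinct x j hx.1 h0 hxj hx.2
  · exact Or.inr (Or.inr ⟨p, x, y, hx, hy, hl, hxi, anc_trans hyj (anc_parent_self h0)⟩)

/-! ### Cones and the injectivity of `v` -/

lemma cone_of_not_pos {i : Fin r} (h : ¬ 0 < (i : ℕ)) : of (C.cone i) = 1 := by
  rw [cone, dif_neg h]
  ext a b
  simp [Pi.single_apply, one_apply, eq_comm]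

lemma cone_of_pos {i : Fin r} (h : 0 < (i : ℕ)) :
    of (C.cone i) = (of (C.cone (C.parent i))).updateRow (C.label i) (C.v (C.parent i)) := by
  rw [cone, dif_pos h]; rfl

lemma v_eq_one_vecMul (i : Fin r) : C.v i = 1 ᵥ* of (C.cone i) :=
  (one_vecMul _).symm

lemma det_cone (i : Fin r) : det (of (C.cone i)) = 1 := by
  induction i using WellFoundedLT.induction with | ind i IH
  by_cases h : 0 < (i : ℕ)
  · have := det_updateRow_sum (of (C.cone (C.parent i))) (C.label i) 1
    simp only [Pi.one_apply, one_smul] at this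
    rw [cone_of_pos h, ← IH _ (C.parent_lt i h)]
    exact this
  · rw [cone_of_not_pos h, det_one]

lemma vecMul_cone_injective (C : ToricConstellation r) (p : Fin r) :
    Function.Injective (of (C.cone p)).vecMul :=
  vecMul_injective_of_isUnit <| (isUnit_iff_isUnit_det _).2 <| by
    rw [det_cone]; exact isUnit_one

lemma exists_cone_eq_mul {p x j : Fin r} (hx : C.IsChild x p) (hxj : C.anc x j = true) :
    ∃ L, IsMinColumn L (C.label x) ∧ of (C.cone j) = L * of (C.cone p) := by
  induction j using WellFoundedLT.induction with | ind j IH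
  have hstep : ∀ L q, of (C.cone q) = L * of (C.cone p) →
      (of (C.cone q)).updateRow (C.label j) (C.v q)
        = L.updateRow (C.label j) (1 ᵥ* L) * of (C.cone p) := fun L q hq => by
    rw [updateRow_mul, ← hq, v_eq_one_vecMul, hq, vecMul_vecMul]
  by_cases hjx : j = x
  · subst hjx
    refine ⟨_, isMinColumn_updateRow_one (C.label j), ?_⟩
    rw [cone_of_pos hx.1, hx.2, hstep 1 p (Matrix.one_mul _).symm, vecMul_one]
    rfl
  · have h0 := pos_of_anc_of_ne hxj (Ne.symm hjx)
    obtain ⟨L, hL, hcone⟩ := IH _ (C.parent_lt j h0) (anc_parent_of_ne hxj (Ne.symm hjx))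
    exact ⟨_, hL.updateRow_one_vecMul (C.label j), by rw [cone_of_pos h0, hstep L _ hcone]⟩

lemma exists_v_eq_vecMul {p x j : Fin r} (hx : C.IsChild x p) (hxj : C.anc x j = true) :
    ∃ ν, C.v j = ν ᵥ* of (C.cone p) ∧ ∀ d ≠ C.label x, ν (C.label x) < ν d := by
  obtain ⟨L, hL, hcone⟩ := exists_cone_eq_mul hx hxj
  exact ⟨1 ᵥ* L, by rw [v_eq_one_vecMul, hcone, vecMul_vecMul],
    fun d hd => hL.one_vecMul_lt hd⟩

lemma v_ne_v_of_anc {p j : Fin r} (h : C.anc p j = true) (hne : p ≠ j) : C.v p ≠ C.v j := by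
  intro heq
  obtain ⟨x, hx, hxj⟩ := exists_isChild_anc h hne
  obtain ⟨ν, hν, hlt⟩ := exists_v_eq_vecMul hx hxj
  have h1 : ν = 1 :=
    vecMul_cone_injective C p (hν.symm.trans (heq.symm.trans (v_eq_one_vecMul p)))
  simpa [h1] using hlt (C.label x + 1) (by omega)

lemma v_injective : Function.Injective C.v := by
  intro i j hij
  by_contra hne
  rcases anc_or_anc_or_exists_isChild i j with h | h | ⟨p, x, y, hx, hy, hl, hxi, hyj⟩
  · exact v_ne_v_of_anc h hne hij
  · exact v_ne_v_of_anc h (Ne.symm hne) hij.symm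
  · obtain ⟨ν, hν, hltν⟩ := exists_v_eq_vecMul hx hxi
    obtain ⟨μ, hμ, hltμ⟩ := exists_v_eq_vecMul hy hyj
    obtain rfl : ν = μ := vecMul_cone_injective C p (hν.symm.trans (hij ▸ hμ))
    exact lt_asymm (hltν _ (Ne.symm hl)) (hltμ _ hl)

lemma v_ne_single (i : Fin r) (c : Fin 3) : C.v i ≠ Pi.single c 1 := by
  have hroot : ¬ 0 < ((⟨0, i.pos⟩ : Fin r) : ℕ) := lt_irrefl 0
  by_cases hi : (i : ℕ) = 0
  · rw [v_eq_one_vecMul, cone_of_not_pos (by omega), vecMul_one]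
    intro h
    simpa using congrFun h (c + 1)
  obtain ⟨x, hx, hxi⟩ := exists_isChild_anc (anc_of_val_eq_zero (i := ⟨0, i.pos⟩) rfl)
    (fun h => hi (congrArg Fin.val h).symm)
  obtain ⟨ν, hν, hlt⟩ := exists_v_eq_vecMul hx hxi
  rw [hν, cone_of_not_pos hroot, vecMul_one]
  rintro rfl
  have : ∀ a c : Fin 3,
      ¬ ∀ d ≠ a, (Pi.single c 1 : Fin 3 → ℤ) a < (Pi.single c 1 : Fin 3 → ℤ) d := by
    decide
  exact this _ c hlt

/-! ### Proximity along paths -/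

/-- The last node on the path from the root to `k` whose edge is labelled `c`: the node at which
the `c`-th vector of `cone k` was created (`none` if that vector is still `e_c`). -/
def coneOrigin (C : ToricConstellation r) (k : Fin r) (c : Fin 3) : Option (Fin r) :=
  if 0 < (k : ℕ) then
    if C.label k = c then some k else coneOrigin C (C.parent k) c
  else none
termination_by (k : ℕ)
decreasing_by exact C.parent_lt k ‹_›

lemma coneOrigin_of_not_pos {k : Fin r} (h : ¬ 0 < (k : ℕ)) (c : Fin 3) :
    C.coneOrigin k c = none := by
  rw [coneOrigin, if_neg h]

lemma coneOrigin_of_label_eq {k : Fin r} (h : 0 < (k : ℕ)) :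
    C.coneOrigin k (C.label k) = some k := by
  rw [coneOrigin, if_pos h, if_pos rfl]

lemma coneOrigin_of_label_ne {k : Fin r} {c : Fin 3} (h : 0 < (k : ℕ)) (hc : C.label k ≠ c) :
    C.coneOrigin k c = C.coneOrigin (C.parent k) c := by
  rw [coneOrigin, if_pos h, if_neg hc]

lemma coneOrigin_eq_some_iff {k x : Fin r} {c : Fin 3} :
    C.coneOrigin k c = some x ↔ 0 < (x : ℕ) ∧ C.label x = c ∧ C.anc x k = true ∧
      ∀ z, C.anc x z = true → C.anc z k = true → z ≠ x → C.label z ≠ c := by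
  induction k using WellFoundedLT.induction with | ind k IH
  by_cases h0 : 0 < (k : ℕ)
  swap
  · simp only [coneOrigin_of_not_pos h0, reduceCtorEq, false_iff, not_and]
    intro hx0 _ hxk
    have := Fin.le_iff_val_le_val.1 (le_of_anc hxk)
    omega
  by_cases hc : C.label k = c
  · subst hc
    rw [coneOrigin_of_label_eq h0, Option.some_inj]
    constructor
    · rintro rfl
      exact ⟨h0, rfl, anc_refl k, fun z hxz hzx hne => absurd (anc_antisymm hzx hxz) hne⟩
    · rintro ⟨-, hl, hxk, hno⟩
      by_contra hne
      exact hno k hxk (anc_refl k) hne rfl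
  rw [coneOrigin_of_label_ne h0 hc, IH _ (C.parent_lt k h0)]
  constructor
  · rintro ⟨hx0, hl, hxk, hno⟩
    refine ⟨hx0, hl, anc_trans hxk (anc_parent_self h0), fun z hxz hzk hzx => ?_⟩
    rcases eq_or_ne z k with rfl | hzk'
    · exact hc
    · exact hno z hxz (anc_parent_of_ne hzk hzk') hzx
  · rintro ⟨hx0, hl, hxk, hno⟩
    have hxk' : x ≠ k := fun h => hc (h ▸ hl)
    exact ⟨hx0, hl, anc_parent_of_ne hxk hxk',
      fun z hxz hzk hzx => hno z hxz (anc_trans hzk (anc_parent_self h0)) hzx⟩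

lemma mem_labelsUnder_iff {i : Fin r} {c : Fin 3} :
    c ∈ C.labelsUnder i ↔ ∃ x, C.coneOrigin i c = some x := by
  induction i using WellFoundedLT.induction with | ind i IH
  by_cases h0 : 0 < (i : ℕ)
  · rw [labelsUnder, dif_pos h0, Finset.mem_insert]
    by_cases hc : C.label i = c
    · subst hc
      simp [coneOrigin_of_label_eq h0]
    · rw [coneOrigin_of_label_ne h0 hc, ← IH _ (C.parent_lt i h0)]
      simp [Ne.symm hc]
  · rw [labelsUnder, dif_neg h0, coneOrigin_of_not_pos h0]
    simp

lemma cone_apply_of_pos {k : Fin r} (h : 0 < (k : ℕ)) (c : Fin 3) :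
    C.cone k c = if c = C.label k then C.v (C.parent k) else C.cone (C.parent k) c := by
  rw [cone, dif_pos h, Function.update_apply]
  rfl

lemma cone_eq_v_of_coneOrigin {k x : Fin r} {c : Fin 3} (h : C.coneOrigin k c = some x) :
    C.cone k c = C.v (C.parent x) := by
  induction k using WellFoundedLT.induction with | ind k IH
  by_cases h0 : 0 < (k : ℕ)
  · rw [cone_apply_of_pos h0]
    by_cases hc : C.label k = c
    · subst hc
      rw [coneOrigin_of_label_eq h0, Option.some_inj] at h
      simp [h]
    · rw [coneOrigin_of_label_ne h0 hc] at h
      rw [if_neg (Ne.symm hc)]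
      exact IH _ (C.parent_lt k h0) h
  · simp [coneOrigin_of_not_pos h0] at h

lemma cone_eq_single_of_coneOrigin {k : Fin r} {c : Fin 3} (h : C.coneOrigin k c = none) :
    C.cone k c = Pi.single c 1 := by
  induction k using WellFoundedLT.induction with | ind k IH
  by_cases h0 : 0 < (k : ℕ)
  · rw [cone_apply_of_pos h0]
    by_cases hc : C.label k = c
    · subst hc; simp [coneOrigin_of_label_eq h0] at h
    · rw [coneOrigin_of_label_ne h0 hc] at h
      rw [if_neg (Ne.symm hc)]
      exact IH _ (C.parent_lt k h0) h
  · rw [cone, dif_neg h0]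

lemma prox_iff {k i : Fin r} :
    C.Prox k i ↔ ∃ x, C.IsChild x i ∧ C.coneOrigin k (C.label x) = some x := by
  constructor
  · rintro ⟨-, c, hc⟩
    cases hx : C.coneOrigin k c with
    | none => exact absurd (hc.symm.trans (cone_eq_single_of_coneOrigin hx)) (v_ne_single i c)
    | some x =>
      obtain ⟨hx0, hl, -⟩ := coneOrigin_eq_some_iff.1 hx
      have : C.parent x = i := v_injective ((cone_eq_v_of_coneOrigin hx).symm.trans hc)
      exact ⟨x, ⟨hx0, this⟩, hl ▸ hx⟩
  · rintro ⟨x, hx, hox⟩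
    obtain ⟨-, -, hxk, -⟩ := coneOrigin_eq_some_iff.1 hox
    refine ⟨fun hki => ?_, C.label x, by rw [cone_eq_v_of_coneOrigin hox, hx.2]⟩
    exact absurd (le_of_anc (hki ▸ hxk)) (not_le.2 hx.lt)

lemma Prox.anc {k i : Fin r} (h : C.Prox k i) : C.anc i k = true := by
  obtain ⟨x, hx, hox⟩ := prox_iff.1 h
  exact anc_trans hx.anc (coneOrigin_eq_some_iff.1 hox).2.2.1

lemma Prox.lt {k i : Fin r} (h : C.Prox k i) : i < k :=
  lt_of_anc_of_ne h.anc (Ne.symm h.1)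

lemma Prox.of_anc {k i j : Fin r} (h : C.Prox k i) (hjk : C.anc j k = true)
    (hij : C.anc i j = true) (hji : j ≠ i) : C.Prox j i := by
  obtain ⟨x, hx, hox⟩ := prox_iff.1 h
  obtain ⟨hx0, hl, hxk, hno⟩ := coneOrigin_eq_some_iff.1 hox
  have hxj : C.anc x j = true := by
    rcases anc_total_of_anc hxk hjk with h' | h'
    · exact h'
    · rcases hx.eq_or_eq_of_anc hij h' with rfl | rfl
      · exact absurd rfl hji
      · exact anc_refl _
  exact prox_iff.2 ⟨x, hx, coneOrigin_eq_some_iff.2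
    ⟨hx0, hl, hxj, fun z hxz hzj => hno z hxz (anc_trans hzj hjk)⟩⟩

def pathLabels (C : ToricConstellation r) (i k : Fin r) : Finset (Fin 3) :=
  (univ.filter fun y => C.anc i y = true ∧ C.anc y k = true ∧ y ≠ i).image C.label

lemma mem_pathLabels {i k : Fin r} {c : Fin 3} :
    c ∈ C.pathLabels i k ↔
      ∃ y, C.anc i y = true ∧ C.anc y k = true ∧ y ≠ i ∧ C.label y = c := by
  simp [pathLabels, and_assoc]

lemma inChain_iff_exists {i k : Fin r} {a b : Fin 3} :
    C.inChain i a b k = true ↔ ∃ x, C.IsChild x i ∧ C.label x = a ∧ C.anc x k = true ∧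
      ∀ z, C.anc x z = true → C.anc z k = true → z ≠ x → C.label z = b := by
  induction k using WellFoundedLT.induction with | ind k IH
  have hunfold : C.inChain i a b k = true ↔ 0 < (k : ℕ) ∧ (C.parent k = i ∧ C.label k = a ∨
      C.label k = b ∧ C.inChain i a b (C.parent k) = true) := by
    conv_lhs => rw [inChain]
    by_cases h : 0 < (k : ℕ) <;> simp [h]
  rw [hunfold]
  constructor
  · rintro ⟨h0, ⟨hp, hl⟩ | ⟨hl, hch⟩⟩
    · exact ⟨k, ⟨h0, hp⟩, hl, anc_refl k,
        fun z hkz hzk hzx => absurd (anc_antisymm hzk hkz) hzx⟩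
    · obtain ⟨x, hx, hlx, hxk, hall⟩ := (IH _ (C.parent_lt k h0)).1 hch
      refine ⟨x, hx, hlx, anc_trans hxk (anc_parent_self h0), fun z hxz hzk hzx => ?_⟩
      rcases eq_or_ne z k with rfl | hzk'
      · exact hl
      · exact hall z hxz (anc_parent_of_ne hzk hzk') hzx
  · rintro ⟨x, hx, hlx, hxk, hall⟩
    rcases eq_or_ne k x with rfl | hkx
    · exact ⟨hx.1, Or.inl ⟨hx.2, hlx⟩⟩
    have h0 := pos_of_anc_of_ne hxk (Ne.symm hkx)
    refine ⟨h0, Or.inr ⟨hall k hxk (anc_refl k) hkx, (IH _ (C.parent_lt k h0)).2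
      ⟨x, hx, hlx, anc_parent_of_ne hxk (Ne.symm hkx), fun z hxz hzk hzx => ?_⟩⟩⟩
    exact hall z hxz (anc_trans hzk (anc_parent_self h0)) hzx

lemma not_inChain_and_inChain {i k : Fin r} {a b : Fin 3} (hab : a ≠ b) :
    ¬ (C.inChain i a b k = true ∧ C.inChain i b a k = true) := by
  rintro ⟨h₁, h₂⟩
  obtain ⟨x, hx, rfl, hxk, -⟩ := inChain_iff_exists.1 h₁
  obtain ⟨y, hy, rfl, hyk, -⟩ := inChain_iff_exists.1 h₂
  exact hab (congrArg C.label (hx.eq_of_anc hy hxk hyk))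

lemma prox_of_inChain {i k : Fin r} {a b : Fin 3} (hab : a ≠ b)
    (h : C.inChain i a b k = true) : C.Prox k i := by
  obtain ⟨x, hx, rfl, hxk, hall⟩ := inChain_iff_exists.1 h
  refine prox_iff.2
    ⟨x, hx, coneOrigin_eq_some_iff.2 ⟨hx.1, rfl, hxk, fun z hxz hzk hzx => ?_⟩⟩
  rw [hall z hxz hzk hzx]
  exact Ne.symm hab

lemma LinProx.prox {k i : Fin r} (h : C.LinProx k i) : C.Prox k i :=
  let ⟨_, _, hab, hch⟩ := h
  prox_of_inChain hab hch

lemma mem_pathLabels_of_inChain {i k : Fin r} {a b c : Fin 3} (h : C.inChain i a b k = true)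
    (hc : c ∈ C.pathLabels i k) : c = a ∨ c = b := by
  obtain ⟨x, hx, rfl, hxk, hall⟩ := inChain_iff_exists.1 h
  obtain ⟨z, hiz, hzk, hzi, rfl⟩ := mem_pathLabels.1 hc
  rcases anc_total_of_anc hxk hzk with hxz | hzx
  · rcases eq_or_ne z x with rfl | hzx
    · exact Or.inl rfl
    · exact Or.inr (hall z hxz hzk hzx)
  · rcases hx.eq_or_eq_of_anc hiz hzx with rfl | rfl
    · exact absurd rfl hzi
    · exact Or.inl rfl

lemma inChain_or_inChain_iff {i k : Fin r} {a b c : Fin 3} (hab : a ≠ b) (hac : a ≠ c)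
    (hbc : b ≠ c) (h : C.Prox k i) :
    C.inChain i a b k = true ∨ C.inChain i b a k = true ↔ c ∉ C.pathLabels i k := by
  constructor
  · rintro (h' | h') hc <;> rcases mem_pathLabels_of_inChain h' hc with rfl | rfl
    exacts [hac rfl, hbc rfl, hbc rfl, hac rfl]
  intro hc
  obtain ⟨x, hx, hox⟩ := prox_iff.1 h
  obtain ⟨-, -, hxk, hno⟩ := coneOrigin_eq_some_iff.1 hox
  have hpath : ∀ z, C.anc x z = true → C.anc z k = true → C.label z ≠ c :=
    fun z hxz hzk hlz => hc (mem_pathLabels.2 ⟨z, anc_trans hx.anc hxz, hzk,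
      ne_of_gt (hx.lt.trans_le (le_of_anc hxz)), hlz⟩)
  rcases fin_three_eq_or_eq_of_ne hab hac hbc (hpath x (anc_refl x) hxk) with hxa | hxb
  · refine Or.inl (inChain_iff_exists.2 ⟨x, hx, hxa, hxk, fun z hxz hzk hzx => ?_⟩)
    exact (fin_three_eq_or_eq_of_ne hab hac hbc (hpath z hxz hzk)).resolve_left
      (hxa ▸ hno z hxz hzk hzx)
  · refine Or.inr (inChain_iff_exists.2 ⟨x, hx, hxb, hxk, fun z hxz hzk hzx => ?_⟩)
    exact (fin_three_eq_or_eq_of_ne hab hac hbc (hpath z hxz hzk)).resolve_right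
      (hxb ▸ hno z hxz hzk hzx)

lemma linProx_iff {k i : Fin r} : C.LinProx k i ↔ C.Prox k i ∧ C.pathLabels i k ≠ univ := by
  constructor
  · rintro ⟨a, b, hab, hch⟩
    refine ⟨prox_of_inChain hab hch, fun hL => ?_⟩
    obtain ⟨c, hca, hcb⟩ := (by decide : ∀ a b : Fin 3, ∃ c, c ≠ a ∧ c ≠ b) a b
    rcases mem_pathLabels_of_inChain hch (hL ▸ mem_univ c) with rfl | rfl
    exacts [hca rfl, hcb rfl]
  · rintro ⟨h, hL⟩
    obtain ⟨c, -, hc⟩ := Finset.exists_of_ssubset (ssubset_univ_iff.2 hL)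
    obtain ⟨a, b, hab, hac, hbc⟩ :=
      (by decide : ∀ c : Fin 3, ∃ a b, a ≠ b ∧ a ≠ c ∧ b ≠ c) c
    rcases (inChain_or_inChain_iff hab hac hbc h).2 hc with h' | h'
    exacts [⟨a, b, hab, h'⟩, ⟨b, a, hab.symm, h'⟩]

/-- The last node `y` above `k` where the labels of the path change: all edges from `y` down to
`k` carry the label of `k`, while the edge into `y` does not (or `y` is the root). Thus
`k = Q(label y, (label k)^t)` for `Q` the parent of `y`. -/
def bend (C : ToricConstellation r) (k : Fin r) : Fin r :=
  if 0 < (k : ℕ) then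
    if C.label (C.parent k) = C.label k ∧ 0 < (C.parent k : ℕ) then bend C (C.parent k)
    else C.parent k
  else k
termination_by (k : ℕ)
decreasing_by exact C.parent_lt k ‹_›

lemma bend_eq_iff {k w : Fin r} (hk : 0 < (k : ℕ)) :
    C.bend k = w ↔ C.anc w k = true ∧ w ≠ k ∧ (0 < (w : ℕ) → C.label w ≠ C.label k) ∧
      ∀ z, C.anc w z = true → C.anc z k = true → z ≠ w → C.label z = C.label k := by
  induction k using WellFoundedLT.induction with | ind k IH
  have hpk := C.parent_lt k hk
  by_cases hrun : C.label (C.parent k) = C.label k ∧ 0 < (C.parent k : ℕ)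
  · rw [bend, if_pos hk, if_pos hrun, IH _ hpk hrun.2, hrun.1]
    constructor
    · rintro ⟨hwp, hne, hlab, hall⟩
      refine ⟨anc_trans hwp (anc_parent_self hk), ne_of_lt ((le_of_anc hwp).trans_lt hpk),
        hlab, fun z hwz hzk hzw => ?_⟩
      rcases eq_or_ne z k with rfl | hzk'
      · rfl
      · exact hrun.1 ▸ hall z hwz (anc_parent_of_ne hzk hzk') hzw
    · rintro ⟨hwk, hne, hlab, hall⟩
      have hwp := anc_parent_of_ne hwk hne
      refine ⟨hwp, fun hwp' => hlab (hwp' ▸ hrun.2) (hwp' ▸ hrun.1), hlab,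
        fun z hwz hzp hzw => ?_⟩
      exact hall z hwz (anc_trans hzp (anc_parent_self hk)) hzw
  · rw [bend, if_pos hk, if_neg hrun]
    constructor
    · rintro rfl
      refine ⟨anc_parent_self hk, ne_of_lt hpk, fun hp hl => hrun ⟨hl, hp⟩,
        fun z hpz hzk hzp => ?_⟩
      rcases eq_or_ne z k with rfl | hzk'
      · rfl
      · exact absurd (anc_antisymm (anc_parent_of_ne hzk hzk') hpz) hzp
    · rintro ⟨hwk, hne, -, hall⟩
      have hwp := anc_parent_of_ne hwk hne
      by_contra hpw
      have hp0 : 0 < (C.parent k : ℕ) :=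
        (Nat.zero_le _).trans_lt (lt_of_anc_of_ne hwp fun h => hpw h.symm)
      exact hrun ⟨hall _ hwp (anc_parent_self hk) hpw, hp0⟩

lemma linProx_iff_eq_parent {k j : Fin r} (hk : 0 < (k : ℕ)) :
    C.LinProx k j ↔ j = C.parent k ∨ 0 < (C.bend k : ℕ) ∧ j = C.parent (C.bend k) := by
  constructor
  · rintro ⟨a, b, hab, hch⟩
    obtain ⟨x, hx, rfl, hxk, hall⟩ := inChain_iff_exists.1 hch
    rcases eq_or_ne x k with rfl | hxk'
    · exact Or.inl hx.2.symm
    have hlk := hall k hxk (anc_refl k) (Ne.symm hxk')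
    have hb : C.bend k = x := (bend_eq_iff hk).2
      ⟨hxk, hxk', fun _ => hlk ▸ hab, fun z hxz hzk hzx => hlk ▸ hall z hxz hzk hzx⟩
    exact Or.inr ⟨hb ▸ hx.1, hb ▸ hx.2.symm⟩
  · rintro (rfl | ⟨hb0, rfl⟩)
    · obtain ⟨b, hb⟩ := (by decide : ∀ a : Fin 3, ∃ b, a ≠ b) (C.label k)
      exact ⟨_, b, hb, inChain_iff_exists.2 ⟨k, ⟨hk, rfl⟩, rfl, anc_refl k,
        fun z hkz hzk hzk' => absurd (anc_antisymm hkz hzk).symm hzk'⟩⟩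
    · obtain ⟨hbk, -, hlab, hall⟩ := (bend_eq_iff hk).1 (rfl : C.bend k = C.bend k)
      exact ⟨_, _, hlab hb0, inChain_iff_exists.2 ⟨_, ⟨hb0, rfl⟩, rfl, hbk, hall⟩⟩

/-! ### Counting -/

lemma Prox.parent {k i : Fin r} (h : C.Prox k i) (hpk : C.parent k ≠ i) :
    C.Prox (C.parent k) i := by
  have hk0 : 0 < (k : ℕ) := (Nat.zero_le _).trans_lt h.lt
  exact h.of_anc (anc_parent_self hk0) (anc_parent_of_ne h.anc h.1.symm) hpk

lemma card_filter_linProx_of_isChild {i k : Fin r} (hk : C.IsChild k i) :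
    #(univ.filter fun j => C.Prox j i ∧ C.LinProx k j) + 1 = #(C.pathLabels i k) := by
  have hJ : (univ.filter fun j => C.Prox j i ∧ C.LinProx k j) = ∅ := by
    refine filter_eq_empty_iff.2 fun j _ ⟨hji, hkj⟩ => ?_
    rcases (linProx_iff_eq_parent hk.1).1 hkj with rfl | ⟨hb0, rfl⟩
    · exact hji.1 hk.2
    · obtain ⟨hbk, hbne, -⟩ := (bend_eq_iff hk.1).1 rfl
      have h₁ := Fin.le_def.1 (le_of_anc (anc_parent_of_ne hbk hbne))
      have h₂ := Fin.lt_def.1 hji.lt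
      have h₃ := C.parent_lt _ hb0
      rw [hk.2] at h₁
      omega
  have hL : C.pathLabels i k = {C.label k} := by
    ext c
    simp only [mem_pathLabels, mem_singleton]
    constructor
    · rintro ⟨z, hiz, hzk, hzi, rfl⟩
      rcases hk.eq_or_eq_of_anc hiz hzk with rfl | rfl
      exacts [absurd rfl hzi, rfl]
    · rintro rfl
      exact ⟨k, hk.anc, anc_refl k, ne_of_gt hk.lt, rfl⟩
  rw [hJ, hL]
  rfl

lemma parent_ne_of_coneOrigin {i k x : Fin r} (h : C.Prox k i) (hx : C.IsChild x i)
    (hox : C.coneOrigin k (C.label x) = some x) (hkx : k ≠ x) : C.parent k ≠ i := fun hpk =>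
  hkx (IsChild.eq_of_anc ⟨(Nat.zero_le _).trans_lt h.lt, hpk⟩ hx (anc_refl k)
    (coneOrigin_eq_some_iff.1 hox).2.2.1)

lemma card_filter_linProx_of_bend_eq {i k x : Fin r} (h : C.Prox k i) (hx : C.IsChild x i)
    (hox : C.coneOrigin k (C.label x) = some x) (hkx : k ≠ x) (hb : C.bend k = x) :
    #(univ.filter fun j => C.Prox j i ∧ C.LinProx k j) + 1 = #(C.pathLabels i k) := by
  have hk0 : 0 < (k : ℕ) := (Nat.zero_le _).trans_lt h.lt
  obtain ⟨-, -, hxk, hno⟩ := coneOrigin_eq_some_iff.1 hox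
  obtain ⟨-, -, -, hrun⟩ := (bend_eq_iff hk0).1 hb
  have hpk := parent_ne_of_coneOrigin h hx hox hkx
  have hJ : (univ.filter fun j => C.Prox j i ∧ C.LinProx k j) = {C.parent k} := by
    ext j
    simp only [mem_filter, mem_univ, true_and, mem_singleton, linProx_iff_eq_parent hk0, hb]
    constructor
    · rintro ⟨hji, rfl | ⟨-, rfl⟩⟩
      exacts [rfl, absurd hx.2 hji.1]
    · rintro rfl
      exact ⟨h.parent hpk, Or.inl rfl⟩
  have hL : C.pathLabels i k = {C.label x, C.label k} := by
    ext c
    simp only [mem_pathLabels, mem_insert, mem_singleton]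
    constructor
    · rintro ⟨z, hiz, hzk, hzi, rfl⟩
      rcases anc_total_of_anc hxk hzk with hxz | hzx
      · rcases eq_or_ne z x with rfl | hzx
        exacts [Or.inl rfl, Or.inr (hrun z hxz hzk hzx)]
      · rcases hx.eq_or_eq_of_anc hiz hzx with rfl | rfl
        exacts [absurd rfl hzi, Or.inl rfl]
    · rintro (rfl | rfl)
      · exact ⟨x, hx.anc, hxk, ne_of_gt hx.lt, rfl⟩
      · exact ⟨k, h.anc, anc_refl k, h.1, rfl⟩
  rw [hJ, hL, card_pair (hno k hxk (anc_refl k) hkx).symm]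
  rfl

lemma anc_bend_of_coneOrigin {k x : Fin r} (hk : 0 < (k : ℕ))
    (hox : C.coneOrigin k (C.label x) = some x) (hkx : k ≠ x) : C.anc x (C.bend k) = true := by
  obtain ⟨-, -, hxk, hno⟩ := coneOrigin_eq_some_iff.1 hox
  obtain ⟨hyk, -, -, hrun⟩ := (bend_eq_iff hk).1 (rfl : C.bend k = C.bend k)
  rcases anc_total_of_anc hxk hyk with hxy | hyx
  · exact hxy
  rcases eq_or_ne x (C.bend k) with hxy | hxy
  · exact hxy ▸ anc_refl x
  · exact absurd (hrun x hyx hxk hxy).symm (hno k hxk (anc_refl k) hkx)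

lemma card_filter_linProx_of_bend_ne {i k x : Fin r} (h : C.Prox k i) (hx : C.IsChild x i)
    (hox : C.coneOrigin k (C.label x) = some x) (hkx : k ≠ x) (hb : C.bend k ≠ x) :
    #(univ.filter fun j => C.Prox j i ∧ C.LinProx k j) + 1 = #(C.pathLabels i k) := by
  have hk0 : 0 < (k : ℕ) := (Nat.zero_le _).trans_lt h.lt
  obtain ⟨-, -, hxk, hno⟩ := coneOrigin_eq_some_iff.1 hox
  obtain ⟨hyk, hyne, hylab, -⟩ := (bend_eq_iff hk0).1 (rfl : C.bend k = C.bend k)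
  have hlk := hno k hxk (anc_refl k) hkx
  have hxy := anc_bend_of_coneOrigin hk0 hox hkx
  have hy0 : 0 < (C.bend k : ℕ) := hx.1.trans_le (Fin.le_def.1 (le_of_anc hxy))
  have hly := hno _ hxy hyk hb
  have hpy : C.Prox (C.parent (C.bend k)) i := by
    have hxp := anc_parent_of_ne hxy (Ne.symm hb)
    exact h.of_anc (anc_trans (anc_parent_self hy0) hyk) (anc_trans hx.anc hxp)
      (ne_of_gt (hx.lt.trans_le (le_of_anc hxp)))
  have hJ : (univ.filter fun j => C.Prox j i ∧ C.LinProx k j)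
      = {C.parent k, C.parent (C.bend k)} := by
    ext j
    simp only [mem_filter, mem_univ, true_and, mem_insert, mem_singleton,
      linProx_iff_eq_parent hk0]
    constructor
    · rintro ⟨-, rfl | ⟨-, rfl⟩⟩
      exacts [Or.inl rfl, Or.inr rfl]
    · rintro (rfl | rfl)
      exacts [⟨h.parent (parent_ne_of_coneOrigin h hx hox hkx), Or.inl rfl⟩,
        ⟨hpy, Or.inr ⟨hy0, rfl⟩⟩]
  have hpp : C.parent (C.bend k) ≠ C.parent k := by
    have h₁ := Fin.le_def.1 (le_of_anc (anc_parent_of_ne hyk hyne))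
    have h₂ := C.parent_lt _ hy0
    exact fun he => by rw [he] at h₂; omega
  have hL : C.pathLabels i k = univ := by
    refine eq_univ_of_forall fun c => mem_pathLabels.2 ?_
    rcases eq_or_ne c (C.label k) with rfl | hck
    · exact ⟨k, h.anc, anc_refl k, h.1, rfl⟩
    rcases fin_three_eq_or_eq_of_ne hly.symm hlk.symm (hylab hy0) hck with rfl | rfl
    · exact ⟨x, hx.anc, hxk, ne_of_gt hx.lt, rfl⟩
    · exact ⟨_, anc_trans hx.anc hxy, hyk, ne_of_gt (hx.lt.trans_le (le_of_anc hxy)), rfl⟩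
  rw [hJ, hL, card_pair hpp.symm]
  rfl

lemma card_filter_linProx_add_one {i k : Fin r} (h : C.Prox k i) :
    #(univ.filter fun j => C.Prox j i ∧ C.LinProx k j) + 1 = #(C.pathLabels i k) := by
  obtain ⟨x, hx, hox⟩ := prox_iff.1 h
  rcases eq_or_ne k x with rfl | hkx
  · exact card_filter_linProx_of_isChild hx
  rcases eq_or_ne (C.bend k) x with hb | hb
  · exact card_filter_linProx_of_bend_eq h hx hox hkx hb
  · exact card_filter_linProx_of_bend_ne h hx hox hkx hb

/-- The nodes `j` with `i → j` correspond to the labels `c` under `i`, through `cone i c = v j`;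
such a `j` also satisfies `k → j` iff `c` does not occur again between `i` and `k`. -/
lemma card_filter_prox_prox {i k : Fin r} (hik : C.anc i k = true) :
    #(univ.filter fun j => C.Prox i j ∧ C.Prox k j) = #(C.labelsUnder i \ C.pathLabels i k) := by
  symm
  refine card_bij (fun c _ => C.parent ((C.coneOrigin i c).getD i)) ?_ ?_ ?_
  · intro c hc
    obtain ⟨hcS, hcL⟩ := mem_sdiff.1 hc
    obtain ⟨x, hox⟩ := mem_labelsUnder_iff.1 hcS
    obtain ⟨hx0, rfl, hxi, hno⟩ := coneOrigin_eq_some_iff.1 hox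
    have hok : C.coneOrigin k (C.label x) = some x := coneOrigin_eq_some_iff.2
      ⟨hx0, rfl, anc_trans hxi hik, fun z hxz hzk hzx hlz => ?_⟩
    · simp only [hox, Option.getD_some, mem_filter, mem_univ, true_and]
      exact ⟨prox_iff.2 ⟨x, ⟨hx0, rfl⟩, hox⟩, prox_iff.2 ⟨x, ⟨hx0, rfl⟩, hok⟩⟩
    rcases anc_total_of_anc hzk hik with hzi | hiz
    · exact hno z hxz hzi hzx hlz
    · rcases eq_or_ne z i with rfl | hzi
      · exact hno z hxz (anc_refl z) hzx hlz
      · exact hcL (mem_pathLabels.2 ⟨z, hiz, hzk, hzi, hlz⟩)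
  · intro c₁ hc₁ c₂ hc₂ heq
    obtain ⟨x₁, hox₁⟩ := mem_labelsUnder_iff.1 (mem_sdiff.1 hc₁).1
    obtain ⟨x₂, hox₂⟩ := mem_labelsUnder_iff.1 (mem_sdiff.1 hc₂).1
    obtain ⟨hx₁0, rfl, hx₁i, -⟩ := coneOrigin_eq_some_iff.1 hox₁
    obtain ⟨hx₂0, rfl, hx₂i, -⟩ := coneOrigin_eq_some_iff.1 hox₂
    simp only [hox₁, hox₂, Option.getD_some] at heq
    rw [IsChild.eq_of_anc ⟨hx₁0, heq⟩ ⟨hx₂0, rfl⟩ hx₁i hx₂i]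
  · intro j hj
    obtain ⟨hij, hkj⟩ := (mem_filter.1 hj).2
    obtain ⟨x, hx, hox⟩ := prox_iff.1 hij
    obtain ⟨y, hy, hoy⟩ := prox_iff.1 hkj
    obtain ⟨-, -, hxi, -⟩ := coneOrigin_eq_some_iff.1 hox
    obtain ⟨-, -, hyk, hno⟩ := coneOrigin_eq_some_iff.1 hoy
    obtain rfl := hx.eq_of_anc hy (anc_trans hxi hik) hyk
    refine ⟨C.label x, mem_sdiff.2 ⟨mem_labelsUnder_iff.2 ⟨x, hox⟩, fun hmem => ?_⟩,
      by simp [hox, hx.2]⟩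
    obtain ⟨z, hiz, hzk, hzi, hlz⟩ := mem_pathLabels.1 hmem
    have hxz : x ≠ z := ne_of_lt ((le_of_anc hxi).trans_lt (lt_of_anc_of_ne hiz hzi.symm))
    exact hno z (anc_trans hxi hiz) hzk hxz.symm hlz

lemma card_filter_prox (i : Fin r) : #(univ.filter fun j => C.Prox i j) = #(C.labelsUnder i) := by
  have h := card_filter_prox_prox (C := C) (anc_refl i)
  have hL : C.pathLabels i i = ∅ := eq_empty_of_forall_notMem fun c hc => by
    obtain ⟨z, hiz, hzi, hne, -⟩ := mem_pathLabels.1 hc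
    exact hne (anc_antisymm hzi hiz)
  simpa [hL] using h

end ToricConstellation

namespace ToricCluster

variable {r : ℕ} (A : ToricCluster r)

lemma M_add_M_eq_sum (i : Fin r) (a b c : Fin 3) (hab : a ≠ b) (hac : a ≠ c) (hbc : b ≠ c) :
    A.M i a b + A.M i b a =
      ∑ k ∈ (A.proxSet i).filter (fun k => c ∉ A.pathLabels i k), A.m k := by
  rw [M, M, ← sum_union (disjoint_filter.2 fun k _ h₁ h₂ =>
    not_inChain_and_inChain hab ⟨h₁, h₂⟩), ← filter_or, proxSet, filter_filter]
  refine sum_congr (filter_congr fun k _ => ⟨fun h => ?_, fun ⟨h, hc⟩ =>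
    (inChain_or_inChain_iff hab hac hbc h).2 hc⟩) fun _ _ => rfl
  have hk : A.Prox k i := h.elim (prox_of_inChain hab) (prox_of_inChain hab.symm)
  exact ⟨hk, (inChain_or_inChain_iff hab hac hbc hk).1 h⟩

lemma R_eq_sub_sum (i : Fin r) : A.R i = #(A.labelsUnder i)ᶜ * A.m i -
    ∑ k ∈ A.proxSet i, #(A.labelsUnder i ∪ A.pathLabels i k)ᶜ * A.m k := by
  have hR : A.R i = ∑ c ∈ (A.labelsUnder i)ᶜ,
      (A.m i - ∑ k ∈ (A.proxSet i).filter (fun k => c ∉ A.pathLabels i k), A.m k) := by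
    rw [show (A.labelsUnder i)ᶜ = univ.filter (· ∉ A.labelsUnder i) by ext; simp,
      sum_filter, Fin.sum_univ_three, R,
      rab, rab, rab, sub_sub, sub_sub, sub_sub,
      M_add_M_eq_sum A i 0 1 2 (by decide) (by decide) (by decide),
      M_add_M_eq_sum A i 0 2 1 (by decide) (by decide) (by decide),
      M_add_M_eq_sum A i 1 2 0 (by decide) (by decide) (by decide)]
    ring
  rw [hR, sum_sub_distrib, sum_const, nsmul_eq_mul,
    sum_comm' (t' := A.proxSet i) (s' := fun k => (A.labelsUnder i ∪ A.pathLabels i k)ᶜ)]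
  · simp only [sum_const, nsmul_eq_mul]
  · intro c k
    simp only [mem_compl, mem_filter, mem_union, not_or]
    tauto

lemma sum_proxSet_sum_linProx (i : Fin r) :
    ∑ j ∈ A.proxSet i, ∑ k ∈ (A.proxSet i).filter (fun k => A.LinProx k j), A.m k =
      ∑ k ∈ A.proxSet i, ((#(A.pathLabels i k) - 1 : ℕ) : ℤ) * A.m k := by
  rw [sum_comm' (t' := A.proxSet i)
    (s' := fun k => univ.filter fun j => A.Prox j i ∧ A.LinProx k j)]
  · refine sum_congr rfl fun k hk => ?_
    rw [sum_const, nsmul_eq_mul, ← card_filter_linProx_add_one (mem_filter.1 hk).2,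
      Nat.add_sub_cancel]
  · intro j k
    simp only [proxSet, mem_filter, mem_univ, true_and]
    tauto

lemma sum_Bset_sum_linProx (i : Fin r) :
    ∑ j ∈ A.Bset i, ∑ k ∈ (A.proxSet j).filter (fun k => A.LinProx k i), A.m k =
      ∑ k ∈ A.proxSet i, ((if A.pathLabels i k = univ then 0
        else #(A.labelsUnder i \ A.pathLabels i k) : ℕ) : ℤ) * A.m k := by
  rw [sum_comm' (t' := (A.proxSet i).filter fun k => A.pathLabels i k ≠ univ)
    (s' := fun k => univ.filter fun j => A.Prox i j ∧ A.Prox k j), sum_filter]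
  · refine sum_congr rfl fun k hk => ?_
    by_cases hL : A.pathLabels i k = univ
    · simp [hL]
    · rw [if_pos hL, if_neg hL, sum_const, nsmul_eq_mul,
        card_filter_prox_prox (mem_filter.1 hk).2.anc]
  · intro j k
    simp only [Bset, proxSet, mem_filter, mem_univ, true_and, linProx_iff]
    tauto

end ToricCluster

theorem stmt1_general {r : ℕ} (A : ToricCluster r) (i : Fin r) :
    A.chi i = A.D i - A.R i + A.T i := by
  have hcoef : ∀ k ∈ A.proxSet i, ((#(A.labelsUnder i ∪ A.pathLabels i k)ᶜ : ℕ) : ℤ)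
      + ((#(A.pathLabels i k) - 1 : ℕ) : ℤ) + ((if A.pathLabels i k = univ then 0
        else #(A.labelsUnder i \ A.pathLabels i k) : ℕ) : ℤ) = 2 := fun k hk => by
    have hL := card_filter_linProx_add_one (mem_filter.1 hk).2
    exact_mod_cast card_compl_union_add_card_sub_one_add_card_sdiff (card_pos.1 (by omega))
  have hB : (#(A.Bset i) : ℤ) + #(A.labelsUnder i)ᶜ = 3 := by
    rw [Bset, card_filter_prox]
    exact_mod_cast card_add_card_compl _
  have hsum := sum_congr rfl fun k hk => congrArg (· * A.m k) (hcoef k hk)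
  simp only [add_mul, sum_add_distrib, ← mul_sum] at hsum
  simp only [chi, D, T, R_eq_sub_sum, sum_sub_distrib, sum_proxSet_sum_linProx,
    sum_Bset_sum_linProx, sum_const, nsmul_eq_mul, mul_sub, mul_one, ← sq]
  linear_combination A.m i * hB - hsum

theorem stmt1 {r : ℕ} (A : ToricCluster r) (hA : A.Idealistic) (i : Fin r) :
    A.chi i = A.D i - A.R i + A.T i :=
  stmt1_general A i
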